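/- arXiv:0902.0174 — 4 statements merged into one kernel-verified Lean document; each statement's English description precedes it below -/
import Mathlib

section
/- Fix an integer r ≥ 1, a finite set A, and a positive integer n. Let W be a weight such that nW(a,b;i) ∈ ℤ for every a,b ∈ A and every i ∈ {1,…,r}. Then (1/(n!)^r) Σ_{σ∈Sym(n)^r} |{ψ : {1,…,n} → A : d_*(W, W_{σ,ψ}) = 0}| = (n!)^{1−r} · (Π_{a∈A} (nW(a))!)^{2r−1} / (Π_{i=1}^r Π_{a,b∈A} (nW(a,b;i))!). -/
/-!
A permutation `σ` has transfer matrix `M` with respect to `ψ` (that is,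
`|{j : ψ j = a ∧ ψ (σ j) = b}| = M a b`) exactly when `g = ψ ∘ σ` has joint fibre sizes
`|{j : ψ j = a ∧ g j = b}| = M a b`. On each fibre of `ψ` this is a multinomial count, so there
are `∏ m! / ∏ M!` such `g`, and each of them is `ψ ∘ σ` for a coset of the stabiliser of `ψ`,
i.e. for `∏ m!` permutations. Hence a `ψ` with fibre sizes `m` admits `(∏ m!)² / ∏ M!` such `σ`,
any other `ψ` admits none, and there are `n! / ∏ m!` maps `ψ` with fibre sizes `m`. Since
`d_*(W, W_{σ,ψ}) = 0` says that every `σ_i` has transfer matrix `n W(·,·;i)`, exchanging the sums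
over `σ` and `ψ` gives the formula.
-/

open MeasureTheory Real Filter

noncomputable section

/-- A weight on the graph with vertex set `A` and, for each `i ∈ {1,…,r}`, a directed edge
`(a,b;i)` for every pair `a b : A`: functions `v : A → [0,1]` and `e : {1,…,r} × A × A → [0,1]`
with `v a = ∑_b e i a b = ∑_b e i b a` for all `i, a`, and `∑_a v a = 1`. -/
structure Weight (r : ℕ) (A : Type*) [Fintype A] where
  v : A → ℝ
  e : Fin r → A → A → ℝ
  v_nonneg : ∀ a, 0 ≤ v a
  v_le_one : ∀ a, v a ≤ 1
  e_nonneg : ∀ i a b, 0 ≤ e i a b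
  e_le_one : ∀ i a b, e i a b ≤ 1
  row : ∀ i a, v a = ∑ b, e i a b
  col : ∀ i a, v a = ∑ b, e i b a
  total : ∑ a, v a = 1

/-- `d_*(W₁,W₂) = ∑_{i=1}^r ∑_{a,b ∈ A} |W₁(a,b;i) − W₂(a,b;i)|`. -/
def dW {r : ℕ} {A : Type*} [Fintype A] (W₁ W₂ : Weight r A) : ℝ :=
  ∑ i : Fin r, ∑ a : A, ∑ b : A, |W₁.e i a b - W₂.e i a b|

/-- `d_*(W, W_{σ,ψ})` where `W_{σ,ψ}` is the empirical weight of the tuple of permutations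
`σ = (σ_1,…,σ_r)` and the map `ψ : {1,…,n} → A`, namely
`W_{σ,ψ}(a,b;i) = |{j : ψ(j) = a, ψ(σ_i(j)) = b}| / n`. -/
def dWemp {r : ℕ} {A : Type*} [Fintype A] {n : ℕ} (W : Weight r A)
    (σs : Fin r → Equiv.Perm (Fin n)) (ψ : Fin n → A) : ℝ :=
  ∑ i : Fin r, ∑ a : A, ∑ b : A,
    |W.e i a b - (Nat.card {j : Fin n // ψ j = a ∧ ψ (σs i j) = b} : ℝ) / n|

/-- `F(W) = −∑_{i,a,b} W(a,b;i) log W(a,b;i) + (2r−1) ∑_a W(a) log W(a)`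
(with the convention `0 log 0 = 0`). -/
def FW {r : ℕ} {A : Type*} [Fintype A] (W : Weight r A) : ℝ :=
  -(∑ i : Fin r, ∑ a : A, ∑ b : A, W.e i a b * Real.log (W.e i a b)) +
    (2 * (r : ℝ) - 1) * ∑ a : A, W.v a * Real.log (W.v a)

open Equiv
open scoped Nat

section FiberCounting

variable {α ι κ : Type*}

lemma Nat.card_eq_card_mul_of_card_fiber {P Q : Type*} [Finite P] [Finite Q] (Φ : P → Q)
    {c : ℕ} (h : ∀ q, Nat.card {p // Φ p = q} = c) : Nat.card P = Nat.card Q * c := by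
  have := Fintype.ofFinite Q
  rw [← Nat.card_congr (sigmaFiberEquiv Φ), Nat.card_sigma, Finset.sum_congr rfl fun q _ => h q,
    Finset.sum_const, smul_eq_mul, Finset.card_univ, Nat.card_eq_fintype_card]

lemma card_subtype_eq_sum_card_and [Finite α] [Fintype κ] (p : α → Prop) (g : α → κ) :
    Nat.card {a // p a} = ∑ k, Nat.card {a // p a ∧ g a = k} := by
  rw [← Nat.card_sigma, ← Nat.card_congr (sigmaFiberEquiv fun a : {a // p a} => g a)]
  exact Nat.card_congr (sigmaCongrRight fun k => subtypeSubtypeEquivSubtypeInter p (g · = k))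

lemma exists_perm_comp_eq [Finite α] {f g : α → ι}
    (h : ∀ i, Nat.card {a // f a = i} = Nat.card {a // g a = i}) :
    ∃ τ : Perm α, f ∘ τ = g := by
  have e i : {a // g a = i} ≃ {a // f a = i} := (Finite.card_eq.mp (h i).symm).some
  exact ⟨ofFiberEquiv e, funext (ofFiberEquiv_map e)⟩

lemma exists_card_fiber_eq [Finite α] [Fintype ι] (m : ι → ℕ) (h : ∑ i, m i = Nat.card α) :
    ∃ f : α → ι, ∀ i, Nat.card {a // f a = i} = m i := by
  obtain ⟨e⟩ : Nonempty (α ≃ Σ i, Fin (m i)) := Finite.card_eq.mp (by simp [h])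
  exact ⟨fun a => (e a).1, fun i =>
    Nat.card_eq_of_equiv_fin ((e.subtypeEquiv fun a => Iff.rfl).trans (sigmaSubtype i))⟩

lemma card_perm_comp_eq_self [Finite α] [Fintype ι] (f : α → ι) :
    Nat.card {σ : Perm α // f ∘ σ = f} = ∏ i, (Nat.card {a // f a = i})! := by
  classical
  have := Fintype.ofFinite α
  simp only [Nat.card_eq_fintype_card, DomMulAct.stabilizer_card]

lemma card_perm_comp_eq [Finite α] [Fintype ι] {f g : α → ι}
    (h : ∀ i, Nat.card {a // f a = i} = Nat.card {a // g a = i}) :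
    Nat.card {σ : Perm α // f ∘ σ = g} = ∏ i, (Nat.card {a // f a = i})! := by
  obtain ⟨τ, rfl⟩ := exists_perm_comp_eq h
  rw [← card_perm_comp_eq_self f]
  refine Nat.card_congr (subtypeEquiv (Equiv.mulRight τ⁻¹) fun σ => ?_)
  rw [Equiv.coe_mulRight, Perm.coe_mul, Perm.inv_def, ← Function.comp_assoc, comp_symm_eq]

lemma Nat.card_fiber_comp_perm (f : α → ι) (σ : Perm α) (i : ι) :
    Nat.card {a // f (σ a) = i} = Nat.card {a // f a = i} :=
  Nat.card_congr (σ.subtypeEquiv fun _ => Iff.rfl)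

theorem card_fun_card_fiber_eq_mul_prod_factorial [Finite α] [Fintype ι] (m : ι → ℕ)
    (h : ∑ i, m i = Nat.card α) :
    Nat.card {g : α → ι // ∀ i, Nat.card {a // g a = i} = m i} * ∏ i, (m i)! = (Nat.card α)! := by
  obtain ⟨f, hf⟩ := exists_card_fiber_eq m h
  let Φ (σ : Perm α) : {g : α → ι // ∀ i, Nat.card {a // g a = i} = m i} :=
    ⟨f ∘ σ, fun i => (Nat.card_fiber_comp_perm f σ i).trans (hf i)⟩
  rw [← Nat.card_perm, Nat.card_eq_card_mul_of_card_fiber Φ fun ⟨g, hg⟩ => ?_]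
  rw [Nat.card_congr (subtypeEquivRight fun σ => Subtype.ext_iff),
    card_perm_comp_eq fun i => (hf i).trans (hg i).symm]
  simp only [hf]

theorem card_fun_card_fiber_and_eq_mul_prod_factorial [Finite α] [Fintype ι] [Fintype κ]
    (f : α → ι) (M : ι → κ → ℕ) (h : ∀ i, ∑ k, M i k = Nat.card {a // f a = i}) :
    Nat.card {g : α → κ // ∀ i k, Nat.card {a // f a = i ∧ g a = k} = M i k} *
        ∏ i, ∏ k, (M i k)! = ∏ i, (Nat.card {a // f a = i})! := by
  let e : (α → κ) ≃ ∀ i, {a // f a = i} → κ :=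
    (arrowCongr (sigmaFiberEquiv f).symm (Equiv.refl κ)).trans (piCurry fun _ _ => κ)
  have hcard : ∀ g i k, Nat.card {a // f a = i ∧ g a = k} = Nat.card {x // e g i x = k} :=
    fun g i k => (Nat.card_congr (subtypeSubtypeEquivSubtypeInter _ (g · = k))).symm
  rw [Nat.card_congr ((subtypeEquiv e fun g => by simp only [hcard]).trans
      (subtypePiEquivPi (p := fun i h => ∀ k, Nat.card {x // h x = k} = M i k))),
    Nat.card_pi, ← Finset.prod_mul_distrib]
  exact Finset.prod_congr rfl fun i _ => card_fun_card_fiber_eq_mul_prod_factorial _ (h i)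

end FiberCounting

section TransferMatrix

variable {α ι : Type*}

theorem card_perm_transfer_eq_mul [Finite α] [Fintype ι] (ψ : α → ι) (M : ι → ι → ℕ)
    (hrow : ∀ i, ∑ k, M i k = Nat.card {a // ψ a = i})
    (hcol : ∀ k, ∑ i, M i k = Nat.card {a // ψ a = k}) :
    Nat.card {σ : Perm α // ∀ i k, Nat.card {a // ψ a = i ∧ ψ (σ a) = k} = M i k} *
        ∏ i, ∏ k, (M i k)! = (∏ i, (Nat.card {a // ψ a = i})!) ^ 2 := by
  let Φ (σ : {σ : Perm α // ∀ i k, Nat.card {a // ψ a = i ∧ ψ (σ a) = k} = M i k}) :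
      {g : α → ι // ∀ i k, Nat.card {a // ψ a = i ∧ g a = k} = M i k} := ⟨ψ ∘ σ.1, σ.2⟩
  have hfiber : ∀ g : {g : α → ι // ∀ i k, Nat.card {a // ψ a = i ∧ g a = k} = M i k},
      Nat.card {σ // Φ σ = g} = ∏ i, (Nat.card {a // ψ a = i})! := by
    rintro ⟨g, hg⟩
    have hgcard : ∀ k, Nat.card {a // ψ a = k} = Nat.card {a // g a = k} := fun k => by
      rw [card_subtype_eq_sum_card_and (g · = k) ψ, ← hcol k]
      exact Finset.sum_congr rfl fun i _ => by simp only [and_comm, hg]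
    rw [← card_perm_comp_eq hgcard]
    exact Nat.card_congr ((subtypeEquivRight fun σ => Subtype.ext_iff).trans
      (subtypeSubtypeEquivSubtype (q := fun σ : Perm α => ψ ∘ σ = g)
        fun hσ => by subst hσ; exact hg))
  rw [Nat.card_eq_card_mul_of_card_fiber Φ hfiber, mul_right_comm,
    card_fun_card_fiber_and_eq_mul_prod_factorial ψ M hrow, sq]

lemma card_perm_transfer_eq_zero [Finite α] [Fintype ι] (ψ : α → ι) (M : ι → ι → ℕ) {i : ι}
    (hi : ∑ k, M i k ≠ Nat.card {a // ψ a = i}) :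
    Nat.card {σ : Perm α // ∀ i k, Nat.card {a // ψ a = i ∧ ψ (σ a) = k} = M i k} = 0 := by
  refine Nat.card_eq_zero.mpr (.inl (isEmpty_subtype _ |>.mpr fun σ hσ => hi ?_))
  simp only [← hσ, ← card_subtype_eq_sum_card_and]

theorem prod_card_perm_transfer_mul {R : Type*} [Fintype R] [Finite α] [Fintype ι] (ψ : α → ι)
    (m : ι → ℕ) (M : R → ι → ι → ℕ) (hψ : ∀ i, Nat.card {a // ψ a = i} = m i)
    (hrow : ∀ r i, ∑ k, M r i k = m i) (hcol : ∀ r k, ∑ i, M r i k = m k) :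
    (∏ r, Nat.card {σ : Perm α // ∀ i k, Nat.card {a // ψ a = i ∧ ψ (σ a) = k} = M r i k}) *
        ∏ r, ∏ i, ∏ k, (M r i k)! = (∏ i, (m i)!) ^ (2 * Fintype.card R) := by
  rw [← Finset.prod_mul_distrib, pow_mul, ← Finset.card_univ, ← Finset.prod_const]
  refine Finset.prod_congr rfl fun r _ => ?_
  simp only [card_perm_transfer_eq_mul ψ (M r) (fun i => (hrow r i).trans (hψ i).symm)
    (fun k => (hcol r k).trans (hψ k).symm), hψ]

end TransferMatrix

lemma sum_card_forall_eq_sum_prod_card {R S X : Type*} [Fintype R] [DecidableEq R] [Fintype S]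
    [Fintype X] (P : R → X → S → Prop) :
    ∑ s : R → S, Nat.card {x // ∀ r, P r x (s r)} = ∑ x, ∏ r, Nat.card {t // P r x t} := by
  classical
  simp only [Nat.card_eq_fintype_card, Fintype.card_subtype, Finset.card_filter,
    ← Fintype.prod_boole, Fintype.prod_sum]
  exact Finset.sum_comm

theorem card_transfer_solutions_mul {R α ι : Type*} [Fintype R] [DecidableEq R] [Nonempty R]
    [Fintype α] [DecidableEq α] [Fintype ι] (m : ι → ℕ) (M : R → ι → ι → ℕ)
    (hsum : ∑ i, m i = Nat.card α) (hrow : ∀ r i, ∑ k, M r i k = m i)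
    (hcol : ∀ r k, ∑ i, M r i k = m k) :
    (∑ σs : R → Perm α, Nat.card {ψ : α → ι //
        ∀ r i k, Nat.card {a // ψ a = i ∧ ψ (σs r a) = k} = M r i k}) *
        (∏ r, ∏ i, ∏ k, (M r i k)!) * ∏ i, (m i)! =
      (Nat.card α)! * (∏ i, (m i)!) ^ (2 * Fintype.card R) := by
  classical
  have hper : ∀ ψ : α → ι,
      (∏ r, Nat.card {σ : Perm α // ∀ i k, Nat.card {a // ψ a = i ∧ ψ (σ a) = k} = M r i k}) *
        ∏ r, ∏ i, ∏ k, (M r i k)! =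
      if ∀ i, Nat.card {a // ψ a = i} = m i then (∏ i, (m i)!) ^ (2 * Fintype.card R) else 0 := by
    intro ψ
    split_ifs with hψ
    · exact prod_card_perm_transfer_mul ψ m M hψ hrow hcol
    · obtain ⟨i, hi⟩ := not_forall.mp hψ
      obtain ⟨r⟩ := ‹Nonempty R›
      rw [Finset.prod_eq_zero (Finset.mem_univ r)
        (card_perm_transfer_eq_zero ψ (M r) ((hrow r i).trans_ne (Ne.symm hi))), zero_mul]
  rw [sum_card_forall_eq_sum_prod_card (fun r (ψ : α → ι) (σ : Perm α) =>
      ∀ i k, Nat.card {a // ψ a = i ∧ ψ (σ a) = k} = M r i k),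
    Finset.sum_mul, Finset.sum_congr rfl fun ψ _ => hper ψ, ← Finset.sum_filter,
    Finset.sum_const, smul_eq_mul, ← Fintype.card_subtype,
    ← Nat.card_eq_fintype_card, mul_right_comm, card_fun_card_fiber_eq_mul_prod_factorial m hsum]

namespace Weight

variable {r : ℕ} {A : Type*} [Fintype A] (W : Weight r A) {n : ℕ} {m : A → ℕ}
  {M : Fin r → A → A → ℕ}

lemma sum_scaled_v (hm : ∀ a, (m a : ℝ) = n * W.v a) : ∑ a, m a = n := by
  have : ((∑ a, m a : ℕ) : ℝ) = n := by
    push_cast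
    rw [Finset.sum_congr rfl fun a _ => hm a, ← Finset.mul_sum, W.total, mul_one]
  exact_mod_cast this

lemma sum_scaled_e_row (hm : ∀ a, (m a : ℝ) = n * W.v a)
    (hM : ∀ i a b, (M i a b : ℝ) = n * W.e i a b) (i : Fin r) (a : A) :
    ∑ b, M i a b = m a := by
  have : ((∑ b, M i a b : ℕ) : ℝ) = m a := by
    push_cast
    rw [Finset.sum_congr rfl fun b _ => hM i a b, ← Finset.mul_sum, ← W.row i a, hm a]
  exact_mod_cast this

lemma sum_scaled_e_col (hm : ∀ a, (m a : ℝ) = n * W.v a)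
    (hM : ∀ i a b, (M i a b : ℝ) = n * W.e i a b) (i : Fin r) (b : A) :
    ∑ a, M i a b = m b := by
  have : ((∑ a, M i a b : ℕ) : ℝ) = m b := by
    push_cast
    rw [Finset.sum_congr rfl fun a _ => hM i a b, ← Finset.mul_sum, ← W.col i b, hm b]
  exact_mod_cast this

lemma dWemp_eq_zero_iff (hn : 0 < n) (hM : ∀ i a b, (M i a b : ℝ) = n * W.e i a b)
    (σs : Fin r → Perm (Fin n)) (ψ : Fin n → A) :
    dWemp W σs ψ = 0 ↔ ∀ i a b, Nat.card {j // ψ j = a ∧ ψ (σs i j) = b} = M i a b := by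
  have hn' : (n : ℝ) ≠ 0 := by positivity
  simp (disch := intros; positivity) only [dWemp, Finset.sum_eq_zero_iff_of_nonneg,
    Finset.mem_univ, forall_const, abs_eq_zero, sub_eq_zero, eq_div_iff hn']
  refine forall₃_congr fun i a b => ?_
  rw [← Nat.cast_inj (R := ℝ), hM, mul_comm, eq_comm]

end Weight

/-- If `W` is a weight with `nW(a,b;i) ∈ ℤ` for all `a b i` (witnessed by the natural numbers
`M i a b = nW(a,b;i)`, whence also `m a = nW(a) ∈ ℤ`), then the expected number, over a
uniformly random `r`-tuple of permutations of `{1,…,n}`, of maps `ψ : {1,…,n} → A` with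
`d_*(W,W_{σ,ψ}) = 0` equals `(n!)^{1−r} (∏_a (nW(a))!)^{2r−1} / ∏_{i,a,b} (nW(a,b;i))!`. -/
theorem expected_count_exact {r : ℕ} (hr : 1 ≤ r) {A : Type*} [Fintype A]
    {n : ℕ} (hn : 0 < n) (W : Weight r A)
    (m : A → ℕ) (M : Fin r → A → A → ℕ)
    (hm : ∀ a, (m a : ℝ) = n * W.v a)
    (hM : ∀ i a b, (M i a b : ℝ) = n * W.e i a b) :
    (∑ σs : Fin r → Equiv.Perm (Fin n),
        (Nat.card {ψ : Fin n → A // dWemp W σs ψ = 0} : ℝ)) / (n.factorial : ℝ) ^ r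
      = (n.factorial : ℝ) ^ ((1 : ℤ) - (r : ℤ)) *
          (∏ a : A, ((m a).factorial : ℝ)) ^ (2 * (r : ℤ) - 1) /
          ∏ i : Fin r, ∏ a : A, ∏ b : A, ((M i a b).factorial : ℝ) := by
  have : Nonempty (Fin r) := ⟨⟨0, hr⟩⟩
  have hcount := card_transfer_solutions_mul m M
    ((W.sum_scaled_v hm).trans (Nat.card_fin n).symm) (W.sum_scaled_e_row hm hM)
    (W.sum_scaled_e_col hm hM)
  rw [Nat.card_fin, Fintype.card_fin] at hcount
  have hnum : ∑ σs : Fin r → Perm (Fin n), (Nat.card {ψ : Fin n → A // dWemp W σs ψ = 0} : ℝ) =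
      ((∑ σs : Fin r → Perm (Fin n), Nat.card {ψ : Fin n → A //
        ∀ i a b, Nat.card {j // ψ j = a ∧ ψ (σs i j) = b} = M i a b} : ℕ) : ℝ) := by
    push_cast
    simp only [W.dWemp_eq_zero_iff hn hM]
  have hF : (n ! : ℝ) ≠ 0 := by positivity
  have hP : (∏ a, ((m a)! : ℝ)) ≠ 0 := by positivity
  have hQ : (∏ i, ∏ a, ∏ b, ((M i a b)! : ℝ)) ≠ 0 := by positivity
  rw [hnum, zpow_sub₀ hF, zpow_sub₀ hP, zpow_one, zpow_one, zpow_natCast,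
    show 2 * (r : ℤ) = ((2 * r : ℕ) : ℤ) by push_cast; ring, zpow_natCast]
  field_simp
  rw [mul_right_comm]
  exact_mod_cast hcount
end
end

section
/- Let A be a finite set and n a positive integer. Let m : A → ℕ and M : A × A → ℕ satisfy Σ_{a∈A} m(a) = n and, for every a ∈ A, Σ_{b∈A} M(a,b) = Σ_{b∈A} M(b,a) = m(a). Let ψ_0 : {1,…,n} → A be a map with |ψ_0⁻¹(a)| = m(a) for all a ∈ A. Then the number of permutations τ ∈ Sym(n) such that |{1 ≤ j ≤ n : ψ_0(j) = a and ψ_0(τ(j)) = b}| = M(a,b) for all a,b ∈ A equals (Π_{a∈A} m(a)!)² / (Π_{a,b∈A} M(a,b)!). -/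
/-!
The map `τ ↦ ψ₀ ∘ τ` sends the permutations in question onto the maps `φ : Fin n → A` whose
joint counts with `ψ₀` are `M`. Such a `φ` has fibres of sizes `m` (the column sums of `M`), so
the permutations `τ` with `ψ₀ ∘ τ = φ` are the fibrewise bijections, `∏ₐ m(a)!` of them.
On the other hand, restricted to the fibre `ψ₀⁻¹(a)`, `φ` is an arbitrary map with fibre sizes
`M(a, ·)`, and by the same orbit count there are `m(a)! / ∏_b M(a,b)!` of those.
-/

open Finset

section

variable {A B X Y : Type*}

theorem Nat.card_eq_card_mul_of_card_fiber_s8 [Finite X] [Finite Y] (F : X → Y)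
    {c : ℕ} (hF : ∀ y, Nat.card {x // F x = y} = c) : Nat.card X = Nat.card Y * c := by
  have := Fintype.ofFinite Y
  rw [← Nat.card_congr (Equiv.sigmaFiberEquiv F), Nat.card_sigma, sum_congr rfl fun y _ => hF y,
    sum_const, Finset.card_univ, smul_eq_mul, Nat.card_eq_fintype_card]

def Equiv.overEquivPiFiber (p : X → A) (q : Y → A) :
    {e : X ≃ Y // ∀ x, q (e x) = p x} ≃ ∀ a, ({x // p x = a} ≃ {y // q y = a}) where
  toFun e a := e.1.subtypeEquiv fun x => by rw [e.2 x]
  invFun u := ⟨Equiv.ofFiberEquiv u, Equiv.ofFiberEquiv_map u⟩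
  left_inv e := by
    ext x
    simp [Equiv.ofFiberEquiv, Equiv.sigmaFiberEquiv]
  right_inv u := by
    ext a ⟨x, rfl⟩
    simp [Equiv.ofFiberEquiv, Equiv.sigmaFiberEquiv]

theorem Nat.card_equiv_over [Fintype A] [Finite X] [Finite Y] (p : X → A) (q : Y → A)
    (h : ∀ a, Nat.card {x // p x = a} = Nat.card {y // q y = a}) :
    Nat.card {e : X ≃ Y // ∀ x, q (e x) = p x} = ∏ a, (Nat.card {x // p x = a}).factorial := by
  rw [Nat.card_congr (Equiv.overEquivPiFiber p q), Nat.card_pi]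
  refine prod_congr rfl fun a _ => ?_
  obtain ⟨e⟩ := Finite.card_eq.mp (h a)
  rw [Nat.card_congr ((Equiv.refl _).equivCongr e.symm), Nat.card_perm]

theorem Nat.card_perm_comp_eq_mul [Fintype A] [Finite X] (f₀ : X → A) (P : (X → A) → Prop)
    (hP : ∀ f, P f → ∀ a, Nat.card {x // f x = a} = Nat.card {x // f₀ x = a}) :
    Nat.card {σ : Equiv.Perm X // P (f₀ ∘ σ)}
      = Nat.card {f // P f} * ∏ a, (Nat.card {x // f₀ x = a}).factorial := by
  refine Nat.card_eq_card_mul_of_card_fiber_s8 (fun σ => ⟨f₀ ∘ σ.1, σ.2⟩) fun f => ?_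
  have hfiber : {σ : {σ : Equiv.Perm X // P (f₀ ∘ σ)} // (⟨f₀ ∘ σ.1, σ.2⟩ : {f // P f}) = f}
      ≃ {σ : Equiv.Perm X // ∀ x, f₀ (σ x) = f.1 x} :=
    (Equiv.subtypeEquivRight fun σ => Subtype.ext_iff).trans <|
      (Equiv.subtypeSubtypeEquivSubtypeInter (fun σ : Equiv.Perm X => P (f₀ ∘ σ))
        (fun σ => f₀ ∘ σ = f.1)).trans <|
      Equiv.subtypeEquivRight fun σ =>
        ⟨fun h => congrFun h.2, fun h => have hσ : f₀ ∘ σ = f.1 := funext h; ⟨hσ ▸ f.2, hσ⟩⟩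
  rw [Nat.card_congr hfiber, Nat.card_equiv_over f.1 f₀ (hP f.1 f.2)]
  exact prod_congr rfl fun a _ => by rw [hP f.1 f.2]

theorem exists_fun_card_fiber_eq [Fintype A] [Finite X] (k : A → ℕ)
    (h : Nat.card X = ∑ a, k a) : ∃ f : X → A, ∀ a, Nat.card {x // f x = a} = k a := by
  obtain ⟨e⟩ := Finite.card_eq.mp (h.trans (by simp) : Nat.card X = Nat.card (Σ a, Fin (k a)))
  refine ⟨fun x => (e x).1, fun a => ?_⟩
  rw [Nat.card_congr ((e.subtypeEquiv fun x => Iff.rfl).trans (Equiv.sigmaSubtype a))]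
  simp

theorem Nat.card_fun_fiber_card_eq_mul_prod_factorial [Fintype A] [Finite X] (k : A → ℕ)
    (h : Nat.card X = ∑ a, k a) :
    Nat.card {f : X → A // ∀ a, Nat.card {x // f x = a} = k a} * ∏ a, (k a).factorial
      = (Nat.card X).factorial := by
  obtain ⟨f₀, hf₀⟩ := exists_fun_card_fiber_eq k h
  have hall : ∀ σ : Equiv.Perm X, ∀ a, Nat.card {x // f₀ (σ x) = a} = k a := fun σ a =>
    (Nat.card_congr (σ.subtypeEquiv fun x => Iff.rfl)).trans (hf₀ a)
  have := Nat.card_perm_comp_eq_mul f₀ (fun f => ∀ a, Nat.card {x // f x = a} = k a)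
    fun f hf a => (hf a).trans (hf₀ a).symm
  simp only [hf₀] at this
  rw [← this]
  exact (Nat.card_congr (Equiv.subtypeUnivEquiv hall)).trans Nat.card_perm

def Equiv.funEquivPiFiber (ψ : X → A) : (X → B) ≃ ∀ a, {x // ψ x = a} → B where
  toFun φ a x := φ x
  invFun g x := g (ψ x) ⟨x, rfl⟩
  left_inv _ := rfl
  right_inv g := by
    funext a ⟨x, hx⟩
    subst hx
    rfl

theorem Nat.card_and_eq_card_fiber_restrict (ψ : X → A) (φ : X → B) (a : A) (b : B) :
    Nat.card {x // ψ x = a ∧ φ x = b} = Nat.card {y : {x // ψ x = a} // φ y = b} :=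
  Nat.card_congr (Equiv.subtypeSubtypeEquivSubtypeInter _ _).symm

theorem Nat.card_fiber_eq_sum_card_and [Fintype A] [Finite X] (ψ : X → A) (φ : X → B) (b : B) :
    Nat.card {x // φ x = b} = ∑ a, Nat.card {x // ψ x = a ∧ φ x = b} := by
  rw [← Nat.card_congr (Equiv.sigmaFiberEquiv fun y : {x // φ x = b} => ψ y), Nat.card_sigma]
  refine sum_congr rfl fun a _ => Nat.card_congr ?_
  exact (Equiv.subtypeSubtypeEquivSubtypeInter (fun x => φ x = b) (fun x => ψ x = a)).trans
    (Equiv.subtypeEquivRight fun x => and_comm)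

def Equiv.jointCountEquivPi (ψ : X → A) (M : A → B → ℕ) :
    {φ : X → B // ∀ a b, Nat.card {x // ψ x = a ∧ φ x = b} = M a b}
      ≃ ∀ a, {g : {x // ψ x = a} → B // ∀ b, Nat.card {y // g y = b} = M a b} :=
  (Equiv.subtypeEquiv (Equiv.funEquivPiFiber ψ) fun φ => by
    simp only [Nat.card_and_eq_card_fiber_restrict ψ φ]; rfl).trans Equiv.subtypePiEquivPi

theorem Nat.card_jointCount_mul_prod_factorial [Fintype A] [Fintype B] [Finite X] (ψ : X → A)
    (M : A → B → ℕ)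
    (hrow : ∀ a, ∑ b, M a b = Nat.card {x // ψ x = a}) :
    Nat.card {φ : X → B // ∀ a b, Nat.card {x // ψ x = a ∧ φ x = b} = M a b}
        * ∏ a, ∏ b, (M a b).factorial
      = ∏ a, (Nat.card {x // ψ x = a}).factorial := by
  rw [Nat.card_congr (Equiv.jointCountEquivPi ψ M), Nat.card_pi, ← prod_mul_distrib]
  exact prod_congr rfl fun a _ => Nat.card_fun_fiber_card_eq_mul_prod_factorial (M a) (hrow a).symm

end

theorem count_permutations_with_transition_counts_general
    {A : Type*} [Fintype A] {n : ℕ}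
    (m : A → ℕ) (M : A → A → ℕ)
    (hrow : ∀ a, ∑ b : A, M a b = m a)
    (hcol : ∀ a, ∑ b : A, M b a = m a)
    (ψ₀ : Fin n → A) (hψ₀ : ∀ a, Nat.card {j : Fin n // ψ₀ j = a} = m a) :
    (Nat.card {τ : Equiv.Perm (Fin n) //
        ∀ a b, Nat.card {j : Fin n // ψ₀ j = a ∧ ψ₀ (τ j) = b} = M a b} : ℝ)
      = (∏ a : A, ((m a).factorial : ℝ)) ^ 2 /
          ∏ a : A, ∏ b : A, ((M a b).factorial : ℝ) := by
  let HasCounts (φ : Fin n → A) : Prop :=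
    ∀ a b, Nat.card {j : Fin n // ψ₀ j = a ∧ φ j = b} = M a b
  have hperms : Nat.card {τ : Equiv.Perm (Fin n) // HasCounts (ψ₀ ∘ τ)}
      = Nat.card {φ // HasCounts φ} * ∏ a, (m a).factorial := by
    have := Nat.card_perm_comp_eq_mul ψ₀ HasCounts fun φ hφ b => by
      rw [Nat.card_fiber_eq_sum_card_and ψ₀ φ, sum_congr rfl fun a _ => hφ a b, hcol, hψ₀]
    simpa only [hψ₀] using this
  have hmaps :
      Nat.card {φ // HasCounts φ} * ∏ a, ∏ b, (M a b).factorial = ∏ a, (m a).factorial := by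
    simpa only [hψ₀] using Nat.card_jointCount_mul_prod_factorial ψ₀ M fun a => by rw [hrow, hψ₀]
  have hM : (∏ a, ∏ b, ((M a b).factorial : ℝ)) ≠ 0 := by positivity
  rw [eq_div_iff hM, sq]
  exact_mod_cast (by rw [hperms, mul_right_comm, hmaps] :
    Nat.card {τ : Equiv.Perm (Fin n) // HasCounts (ψ₀ ∘ τ)} * ∏ a, ∏ b, (M a b).factorial
      = (∏ a, (m a).factorial) * ∏ a, (m a).factorial)

/-- Let `m : A → ℕ` and `M : A × A → ℕ` satisfy `∑_a m(a) = n`, and for every `a`,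
`∑_b M(a,b) = ∑_b M(b,a) = m(a)`. If `ψ₀ : {1,…,n} → A` has `|ψ₀⁻¹(a)| = m(a)` for all `a`,
then the number of permutations `τ ∈ Sym(n)` with `|{j : ψ₀(j) = a, ψ₀(τ(j)) = b}| = M(a,b)`
for all `a, b` equals `(∏_a m(a)!)² / ∏_{a,b} M(a,b)!`. -/
theorem count_permutations_with_transition_counts
    {A : Type*} [Fintype A] {n : ℕ} (hn : 0 < n)
    (m : A → ℕ) (M : A → A → ℕ)
    (hmn : ∑ a : A, m a = n)
    (hrow : ∀ a, ∑ b : A, M a b = m a)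
    (hcol : ∀ a, ∑ b : A, M b a = m a)
    (ψ₀ : Fin n → A) (hψ₀ : ∀ a, Nat.card {j : Fin n // ψ₀ j = a} = m a) :
    (Nat.card {τ : Equiv.Perm (Fin n) //
        ∀ a b, Nat.card {j : Fin n // ψ₀ j = a ∧ ψ₀ (τ j) = b} = M a b} : ℝ)
      = (∏ a : A, ((m a).factorial : ℝ)) ^ 2 /
          ∏ a : A, ∏ b : A, ((M a b).factorial : ℝ) :=
  count_permutations_with_transition_counts_general m M hrow hcol ψ₀ hψ₀
end

section
/- Fix an integer r ≥ 1 and a finite set A. There exists a constant k > 0, depending only on r and |A| (one may take k = r|A|²), such that for every weight W and every positive integer n there exists a weight W̃ with nW̃(a,b;i) ∈ ℤ for all a,b ∈ A and i ∈ {1,…,r} (so that q_{W̃} is finite and divides n) and d_*(W, W̃) ≤ k/n. -/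
open MeasureTheory Real Filter

noncomputable section

/-!
Fix an enumeration `ε` of `A`. For each `i`, round the two-dimensional cumulative sums
`S(p, q) = n ∑_{ε a < p, ε b < q} W(a,b;i)` down to integers and take mixed second differences.
Each entry of the resulting integer matrix is within `2` of `n W(a,b;i)`, and its row and column
sums telescope to the first differences of `⌊n ∑_{ε a < p} W(a)⌋`, which do not depend on `i`.
The entries are nonnegative as soon as every `n W(a,b;i) ≥ 2`; this is arranged by first mixing
`W` with the uniform weight in proportion `2|A|²/n`, at a cost of `O(r |A|² / n)` in `d_*`.
For `n < 2|A|²` a point mass already works, since `d_*` never exceeds `2r`.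
-/

open Finset fwdDiff

section FloorRounding

variable {A : Type*} [Fintype A] {m : ℕ} (ε : A ≃ Fin m)

theorem sum_fwdDiff_comp_equiv {G : Type*} [AddCommGroup G] (g : ℕ → G) :
    ∑ a, Δ_[1] g (ε a) = g m - g 0 := by
  rw [Fintype.sum_equiv ε _ (fun i : Fin m => Δ_[1] g i) (fun _ => rfl),
    Fin.sum_univ_eq_sum_range (Δ_[1] g)]
  exact sum_range_sub g m

def prefixSum (u : A → ℝ) (p : ℕ) : ℝ :=
  ∑ a with (ε a : ℕ) < p, u a

def prefixSum₂ (M : A → A → ℝ) (p q : ℕ) : ℝ :=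
  prefixSum ε (fun a => prefixSum ε (M a) q) p

def floorRound (v : A → ℝ) (a : A) : ℤ :=
  Δ_[1] (fun p => ⌊prefixSum ε v p⌋) (ε a)

def floorRound₂ (M : A → A → ℝ) (a b : A) : ℤ :=
  Δ_[1] (fun p => Δ_[1] (fun q => ⌊prefixSum₂ ε M p q⌋) (ε b)) (ε a)

variable {ε}

theorem prefixSum_zero (u : A → ℝ) : prefixSum ε u 0 = 0 := by
  simp [prefixSum]

theorem prefixSum_card (u : A → ℝ) : prefixSum ε u m = ∑ a, u a := by
  simp [prefixSum]

theorem prefixSum_sub (u w : A → ℝ) (p : ℕ) :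
    prefixSum ε u p - prefixSum ε w p = prefixSum ε (fun a => u a - w a) p := by
  simp [prefixSum, sum_sub_distrib]

theorem fwdDiff_prefixSum (u : A → ℝ) (a : A) : Δ_[1] (prefixSum ε u) (ε a) = u a := by
  simp only [fwdDiff, prefixSum, sum_filter, ← sum_sub_distrib]
  rw [sum_eq_single a (fun x _ hx => ?_) (by simp)]
  · simp
  · have : (ε x : ℕ) ≠ ε a := fun h => hx (ε.injective (Fin.ext h))
    split_ifs <;> first | rfl | omega | simp

theorem prefixSum₂_swap (M : A → A → ℝ) (p q : ℕ) :
    prefixSum₂ ε (Function.swap M) q p = prefixSum₂ ε M p q :=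
  sum_comm

theorem floorRound_nonneg {v : A → ℝ} {a : A} (hv : 0 ≤ v a) : 0 ≤ floorRound ε v a := by
  have h := fwdDiff_prefixSum (ε := ε) v a
  rw [fwdDiff] at h
  simp only [floorRound, fwdDiff, sub_nonneg]
  exact Int.floor_le_floor (by linarith)

theorem sum_floorRound (v : A → ℝ) : ∑ a, floorRound ε v a = ⌊∑ a, v a⌋ := by
  simp [floorRound, sum_fwdDiff_comp_equiv, prefixSum_card, prefixSum_zero]

theorem floorRound₂_swap (M : A → A → ℝ) (a b : A) :
    floorRound₂ ε (Function.swap M) b a = floorRound₂ ε M a b := by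
  simp only [floorRound₂, fwdDiff, prefixSum₂_swap]
  ring

theorem sum_floorRound₂_right {M : A → A → ℝ} {v : A → ℝ} (hM : ∀ a, ∑ b, M a b = v a)
    (a : A) : ∑ b, floorRound₂ ε M a b = floorRound ε v a := by
  have hrow : ∀ p, prefixSum₂ ε M p m = prefixSum ε v p := fun p => by
    simp only [prefixSum₂, prefixSum_card, hM]
  have hswap : ∀ b, floorRound₂ ε M a b =
      Δ_[1] (fun q => Δ_[1] (fun p => ⌊prefixSum₂ ε M p q⌋) (ε a)) (ε b) := fun b => by
    simp only [floorRound₂, fwdDiff]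
    ring
  rw [sum_congr rfl fun b _ => hswap b, sum_fwdDiff_comp_equiv]
  simp only [fwdDiff, hrow]
  simp [prefixSum₂, prefixSum, floorRound, fwdDiff]

theorem sum_floorRound₂_left {M : A → A → ℝ} {v : A → ℝ} (hM : ∀ b, ∑ a, M a b = v b)
    (b : A) : ∑ a, floorRound₂ ε M a b = floorRound ε v b := by
  simp only [← floorRound₂_swap M]
  exact sum_floorRound₂_right hM b

theorem abs_floor_alternating_sub_lt (s₁ s₂ s₃ s₄ : ℝ) :
    |((⌊s₁⌋ - ⌊s₂⌋ - (⌊s₃⌋ - ⌊s₄⌋) : ℤ) : ℝ) - (s₁ - s₂ - (s₃ - s₄))| < 2 := by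
  have := Int.floor_le s₁; have := Int.lt_floor_add_one s₁
  have := Int.floor_le s₂; have := Int.lt_floor_add_one s₂
  have := Int.floor_le s₃; have := Int.lt_floor_add_one s₃
  have := Int.floor_le s₄; have := Int.lt_floor_add_one s₄
  push_cast
  rw [abs_lt]
  constructor <;> linarith

theorem abs_floorRound₂_sub_lt (M : A → A → ℝ) (a b : A) :
    |(floorRound₂ ε M a b : ℝ) - M a b| < 2 := by
  have hcol : ∀ p, Δ_[1] (fun q => prefixSum₂ ε M p q) (ε b) = prefixSum ε (M · b) p := by
    intro p
    simp only [fwdDiff, prefixSum₂, prefixSum_sub]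
    congr 1
    funext x
    exact fwdDiff_prefixSum (M x) b
  have hM : M a b = Δ_[1] (fun p => Δ_[1] (fun q => prefixSum₂ ε M p q) (ε b)) (ε a) := by
    simp only [hcol, fwdDiff_prefixSum]
  rw [hM]
  exact abs_floor_alternating_sub_lt _ _ _ _

end FloorRounding

namespace Weight

variable {r : ℕ} {A : Type*} [Fintype A]

def ofNonneg (v : A → ℝ) (e : Fin r → A → A → ℝ) (hv : ∀ a, 0 ≤ v a)
    (he : ∀ i a b, 0 ≤ e i a b) (row : ∀ i a, v a = ∑ b, e i a b)
    (col : ∀ i a, v a = ∑ b, e i b a) (total : ∑ a, v a = 1) : Weight r A where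
  v := v
  e := e
  v_nonneg := hv
  v_le_one a := total ▸ single_le_sum (fun a _ => hv a) (mem_univ a)
  e_nonneg := he
  e_le_one i a b := calc
    e i a b ≤ ∑ b, e i a b := single_le_sum (fun b _ => he i a b) (mem_univ b)
    _ = v a := (row i a).symm
    _ ≤ 1 := total ▸ single_le_sum (fun a _ => hv a) (mem_univ a)
  row := row
  col := col
  total := total

theorem sum_sum_e (W : Weight r A) (i : Fin r) : ∑ a, ∑ b, W.e i a b = 1 := by
  simp only [← W.row, W.total]

def mix (θ : unitInterval) (W U : Weight r A) : Weight r A :=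
  have h₀ := unitInterval.nonneg θ
  have h₁ := unitInterval.one_minus_nonneg θ
  ofNonneg (fun a => (1 - θ) * W.v a + θ * U.v a)
    (fun i a b => (1 - θ) * W.e i a b + θ * U.e i a b)
    (fun a => add_nonneg (mul_nonneg h₁ (W.v_nonneg a)) (mul_nonneg h₀ (U.v_nonneg a)))
    (fun i a b => add_nonneg (mul_nonneg h₁ (W.e_nonneg i a b)) (mul_nonneg h₀ (U.e_nonneg i a b)))
    (fun i a => by simp only [sum_add_distrib, ← mul_sum, ← W.row, ← U.row])
    (fun i a => by simp only [sum_add_distrib, ← mul_sum, ← W.col, ← U.col])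
    (by simp only [sum_add_distrib, ← mul_sum, W.total, U.total]; ring)

def uniform (r : ℕ) (A : Type*) [Fintype A] [Nonempty A] : Weight r A :=
  ofNonneg (fun _ => 1 / Fintype.card A) (fun _ _ _ => 1 / Fintype.card A ^ 2)
    (fun _ => by positivity) (fun _ _ _ => by positivity)
    (fun _ _ => by simp only [sum_const, card_univ, nsmul_eq_mul]; field_simp)
    (fun _ _ => by simp only [sum_const, card_univ, nsmul_eq_mul]; field_simp) (by simp)

def dirac (r : ℕ) [DecidableEq A] (a₀ : A) : Weight r A :=
  ofNonneg (fun a => if a = a₀ then 1 else 0) (fun _ a b => if a = a₀ ∧ b = a₀ then 1 else 0)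
    (fun _ => by positivity) (fun _ _ _ => by positivity)
    (fun _ _ => by simp [ite_and]) (fun _ _ => by simp [ite_and]) (by simp)

theorem div_card_sq_le_mix_uniform_e [Nonempty A] (θ : unitInterval) (W : Weight r A)
    (i : Fin r) (a b : A) :
    (θ : ℝ) / (Fintype.card A : ℝ) ^ 2 ≤ (W.mix θ (uniform r A)).e i a b := by
  have := mul_nonneg (unitInterval.one_minus_nonneg θ) (W.e_nonneg i a b)
  simp only [mix, uniform, ofNonneg, mul_one_div]
  linarith

theorem exists_nat_eq_mul_dirac_e [DecidableEq A] (n : ℕ) (a₀ : A) (i : Fin r) (a b : A) :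
    ∃ z : ℕ, (z : ℝ) = n * (dirac r a₀).e i a b :=
  ⟨if a = a₀ ∧ b = a₀ then n else 0, by split_ifs <;> simp [dirac, ofNonneg, *]⟩

theorem exists_nat_mul_e_approx (W : Weight r A) {n : ℕ} (hn : 0 < n)
    (hW : ∀ i a b, 2 ≤ n * W.e i a b) :
    ∃ Wt : Weight r A, (∀ i a b, ∃ z : ℕ, (z : ℝ) = n * Wt.e i a b) ∧
      ∀ i a b, |W.e i a b - Wt.e i a b| < 2 / n := by
  let ε := Fintype.equivFin A
  let Y i := floorRound₂ ε (fun a b => n * W.e i a b)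
  let t := floorRound ε (fun a => n * W.v a)
  have hn' : (0 : ℝ) < n := by exact_mod_cast hn
  have hclose i a b : |(Y i a b : ℝ) - n * W.e i a b| < 2 := abs_floorRound₂_sub_lt _ a b
  have hY i a b : 0 ≤ Y i a b := by
    have := (abs_lt.1 (hclose i a b)).1
    have := hW i a b
    exact_mod_cast (by linarith : (0 : ℝ) ≤ Y i a b)
  have ht a : 0 ≤ t a := floorRound_nonneg (mul_nonneg n.cast_nonneg (W.v_nonneg a))
  have hrow i a : ∑ b, Y i a b = t a :=
    sum_floorRound₂_right (fun a => by rw [← mul_sum, ← W.row i a]) a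
  have hcol i b : ∑ a, Y i a b = t b :=
    sum_floorRound₂_left (fun b => by rw [← mul_sum, ← W.col i b]) b
  have htotal : ∑ a, t a = n := by
    rw [sum_floorRound, ← mul_sum, W.total, mul_one, Int.floor_natCast]
  let Wt : Weight r A := ofNonneg (fun a => t a / n) (fun i a b => Y i a b / n)
    (fun a => div_nonneg (mod_cast ht a) hn'.le)
    (fun i a b => div_nonneg (mod_cast hY i a b) hn'.le)
    (fun i a => by rw [← sum_div, ← Int.cast_sum, hrow])
    (fun i a => by rw [← sum_div, ← Int.cast_sum, hcol])
    (by rw [← sum_div, ← Int.cast_sum, htotal, Int.cast_natCast, div_self hn'.ne'])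
  refine ⟨Wt, fun i a b => ⟨(Y i a b).toNat, ?_⟩, fun i a b => ?_⟩
  · simp only [Wt, ofNonneg, mul_div_cancel₀ _ hn'.ne']
    exact_mod_cast Int.toNat_of_nonneg (hY i a b)
  · simp only [Wt, ofNonneg]
    rw [show W.e i a b - (Y i a b : ℝ) / n = -((Y i a b - n * W.e i a b) / n) by
      field_simp; ring, abs_neg, abs_div, abs_of_pos hn']
    gcongr
    exact hclose i a b

end Weight

section Distance

variable {r : ℕ} {A : Type*} [Fintype A]

theorem dW_triangle (W₁ W₂ W₃ : Weight r A) :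
    dW W₁ W₃ ≤ dW W₁ W₂ + dW W₂ W₃ := by
  simp only [dW, ← sum_add_distrib]
  gcongr
  exact abs_sub_le _ _ _

theorem dW_le_two_mul (W₁ W₂ : Weight r A) :
    dW W₁ W₂ ≤ 2 * r := by
  calc dW W₁ W₂ ≤ ∑ i : Fin r, ∑ a, ∑ b, (W₁.e i a b + W₂.e i a b) := by
        unfold dW
        gcongr with i _ a _ b
        simpa [abs_of_nonneg (W₁.e_nonneg i a b), abs_of_nonneg (W₂.e_nonneg i a b)]
          using abs_sub (W₁.e i a b) (W₂.e i a b)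
    _ = 2 * r := by
        simp only [sum_add_distrib, Weight.sum_sum_e, sum_const, card_univ, Fintype.card_fin,
          nsmul_eq_mul, mul_one]
        ring

theorem dW_mix_right (θ : unitInterval) (W U : Weight r A) :
    dW W (W.mix θ U) = θ * dW W U := by
  simp only [dW, mul_sum]
  refine sum_congr rfl fun i _ => sum_congr rfl fun a _ => sum_congr rfl fun b _ => ?_
  simp only [Weight.mix, Weight.ofNonneg]
  rw [show W.e i a b - ((1 - θ) * W.e i a b + θ * U.e i a b) = θ * (W.e i a b - U.e i a b) by
    ring, abs_mul, abs_of_nonneg (unitInterval.nonneg θ)]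

theorem dW_le_of_forall_abs_le {W₁ W₂ : Weight r A} {c : ℝ}
    (h : ∀ i a b, |W₁.e i a b - W₂.e i a b| ≤ c) : dW W₁ W₂ ≤ r * Fintype.card A ^ 2 * c := by
  calc dW W₁ W₂ ≤ ∑ _i : Fin r, ∑ _a : A, ∑ _b : A, c := by
        unfold dW
        gcongr with i _ a _ b
        exact h i a b
    _ = r * Fintype.card A ^ 2 * c := by
        simp only [sum_const, card_univ, nsmul_eq_mul, Fintype.card_fin]
        ring

end Distance

/-- There is a constant `k > 0` depending only on `r` and `|A|` such that for every weight `W`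
and every positive integer `n` there is a weight `W̃` with `nW̃(a,b;i) ∈ ℤ` for all `a b i`
(so `q_{W̃}` is finite and divides `n`) and `d_*(W,W̃) ≤ k/n`. -/
theorem weight_rational_approx {r : ℕ} (hr : 1 ≤ r) {A : Type*} [Fintype A] :
    ∃ k : ℝ, 0 < k ∧
      ∀ (W : Weight r A) (n : ℕ), 0 < n →
        ∃ Wt : Weight r A,
          (∀ i a b, ∃ z : ℕ, (z : ℝ) = n * Wt.e i a b) ∧ dW W Wt ≤ k / n := by
  classical
  rcases isEmpty_or_nonempty A with hA | hA
  · exact ⟨1, one_pos, fun W _ _ => absurd W.total (by simp)⟩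
  set m := Fintype.card A
  have hm : (0 : ℝ) < m := by exact_mod_cast Fintype.card_pos
  have hr' : (0 : ℝ) < r := by exact_mod_cast hr
  refine ⟨6 * r * m ^ 2, by positivity, fun W n hn => ?_⟩
  have hn' : (0 : ℝ) < n := by exact_mod_cast hn
  rcases lt_or_ge (n : ℝ) (2 * m ^ 2) with hsmall | hlarge
  · refine ⟨Weight.dirac r (Classical.arbitrary A), Weight.exists_nat_eq_mul_dirac_e n _,
      (dW_le_two_mul _ _).trans ?_⟩
    rw [le_div_iff₀ hn']
    nlinarith
  · let θ : unitInterval := ⟨2 * m ^ 2 / n, by positivity, by rwa [div_le_one hn']⟩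
    let W' := W.mix θ (Weight.uniform r A)
    obtain ⟨Wt, hint, hclose⟩ := W'.exists_nat_mul_e_approx hn fun i a b => calc
      (2 : ℝ) = n * (θ / m ^ 2) := by simp only [θ]; field_simp
      _ ≤ n * W'.e i a b := by gcongr; exact W.div_card_sq_le_mix_uniform_e θ i a b
    refine ⟨Wt, hint, ?_⟩
    calc dW W Wt ≤ dW W W' + dW W' Wt := dW_triangle W W' Wt
      _ ≤ θ * (2 * r) + r * m ^ 2 * (2 / n) := by
        rw [dW_mix_right]
        exact add_le_add (mul_le_mul_of_nonneg_left (dW_le_two_mul _ _) (unitInterval.nonneg θ))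
          (dW_le_of_forall_abs_le fun i a b => (hclose i a b).le)
      _ = 6 * r * m ^ 2 / n := by simp only [θ]; field_simp; ring
end
end

section
/- Let G = ⟨s_1,…,s_r⟩ be the free group of rank r ≥ 1, let T be a measure-preserving action of G on a standard probability space (X,μ), let φ : X → A be an observable with A finite, and let B = B(e,m) for some m ≥ 0. There exist constants C, k > 0 depending only on |A| and |B| such that for every ε with 0 < ε < 1/(4|B|), every n, every homomorphism σ : G → Sym(n), and every map ω : {1,…,n} → A, the number of maps ψ : {1,…,n} → A^B with d^*_σ(φ^B, ψ) ≤ ε and π_e∘ψ = ω is at most C·exp(nkε + nH(2|B|ε)), where H(x) := −x log x − (1−x) log(1−x). -/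
/-! A labelling `ψ : {1,…,n} → A^B` with `d^*_σ(φ^B, ψ) ≤ ε` is almost determined by its
central coordinates `ω`. Call the pattern of `ψ` across an edge `v → σ(s_i) v` compatible when
the two labels agree on the translates of `B` they share. The observable `φ^B` produces only
compatible patterns, so at most `n ε` vertices carry an incompatible pattern in some direction,
and all but `|B| n ε` vertices `j` see only compatible patterns in their `σ(B)`-neighbourhood.
At such a `j`, walking along the reduced word of `g ∈ B` gives `ψ(j)(g) = ω(σ(g) j)`.
So `ψ` lies in the Hamming ball of radius `δ n`, `δ = 2 |B| ε`, around `j ↦ (ω(σ(g) j))_g`,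
and that ball has at most `(|A^B| + 1)^{δ n} e^{n H(δ)}` points when `δ ≤ 1/2`. -/

open MeasureTheory Real Filter

noncomputable section

/-- The Shannon entropy `H(φ)` of an observable `φ : X → A` with respect to `μ`. -/
def obsEntropy {X A : Type*} [MeasurableSpace X] (μ : Measure X) (φ : X → A) : ℝ :=
  ∑' a : A, Real.negMulLog ((μ (φ ⁻¹' {a})).toReal)

/-- The joint observable `φ^H : X → A^H`, `φ^H(x) = (φ(T_h x))_{h ∈ H}`. -/
def obsJoin {G X A : Type*} (T : G → X → X) (φ : X → A) (H : Set G) : X → (H → A) :=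
  fun x h => φ (T (h : G) x)

/-- `F(T,φ) = (1-2r) H(φ) + ∑_{i=1}^r H(φ ∨ T_{s_i}φ)` for the free group of rank `r`,
with free generators `s_i = FreeGroup.of i`. -/
def FF (r : ℕ) {X A : Type*} [MeasurableSpace X] (μ : Measure X)
    (T : FreeGroup (Fin r) → X → X) (φ : X → A) : ℝ :=
  (1 - 2 * (r : ℝ)) * obsEntropy μ φ +
    ∑ i : Fin r, obsEntropy μ (fun x => (φ x, φ (T (FreeGroup.of i) x)))

/-- The ball `B(e,n)` of radius `n` about the identity of the free group of rank `r`
in the word metric of the free generating set. -/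
def ball (r n : ℕ) : Set (FreeGroup (Fin r)) :=
  {g | (FreeGroup.toWord g).length ≤ n}

/-- The `f`-invariant `f(T,φ) = inf_n F(T, φ^{B(e,n)})`. -/
def fInv (r : ℕ) {X A : Type*} [MeasurableSpace X] (μ : Measure X)
    (T : FreeGroup (Fin r) → X → X) (φ : X → A) : ℝ :=
  ⨅ n : ℕ, FF r μ T (obsJoin T φ (ball r n))

/-- `ψ^H : {1,…,n} → A^H`, `ψ^H(j) = (ψ(σ(h)j))_{h ∈ H}`. -/
def permJoin {G A : Type*} [Group G] {n : ℕ} (σ : G →* Equiv.Perm (Fin n))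
    (ψ : Fin n → A) (H : Set G) : Fin n → (H → A) :=
  fun j h => ψ (σ (h : G) j)

/-- `d^H_σ(φ,ψ)`: the `ℓ¹`-distance between the distribution of `φ^H` under `μ`
and the distribution of `ψ^H` under the uniform measure on `{1,…,n}`. -/
def dH {G X A : Type*} [Group G] [MeasurableSpace X] (μ : Measure X) {n : ℕ}
    (T : G → X → X) (φ : X → A) (σ : G →* Equiv.Perm (Fin n)) (ψ : Fin n → A)
    (H : Set G) : ℝ :=
  ∑' w : H → A,
    |(μ (obsJoin T φ H ⁻¹' {w})).toReal -
      (Nat.card {j : Fin n // permJoin σ ψ H j = w} : ℝ) / n|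

/-- `d^*_σ(φ,ψ) = ∑_{i=1}^r d^{{e,s_i}}_σ(φ,ψ)`. -/
def dStar (r : ℕ) {X A : Type*} [MeasurableSpace X] (μ : Measure X) {n : ℕ}
    (T : FreeGroup (Fin r) → X → X) (φ : X → A)
    (σ : FreeGroup (Fin r) →* Equiv.Perm (Fin n)) (ψ : Fin n → A) : ℝ :=
  ∑ i : Fin r, dH μ T φ σ ψ {1, FreeGroup.of i}

/-- The expected number, over a uniformly random homomorphism
`σ : FreeGroup (Fin r) →* Sym(n)` (equivalently, over a uniformly random `r`-tuple of
permutations), of maps `ψ : {1,…,n} → A` with `d^H_σ(φ,ψ) ≤ ε`. -/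
def Ecount (r : ℕ) {X A : Type*} [MeasurableSpace X] (μ : Measure X)
    (T : FreeGroup (Fin r) → X → X) (φ : X → A) (H : Set (FreeGroup (Fin r)))
    (ε : ℝ) (n : ℕ) : ℝ :=
  (∑ σs : Fin r → Equiv.Perm (Fin n),
      (Nat.card {ψ : Fin n → A // dH μ T φ (FreeGroup.lift σs) ψ H ≤ ε} : ℝ)) /
    (n.factorial : ℝ) ^ r

/-- `h(Σ,T,φ)` where `Σ = {μ_n}` and `μ_n` is the uniform probability measure on the set of
homomorphisms `FreeGroup (Fin r) →* Sym(n)`. -/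
def hSigma (r : ℕ) {X A : Type*} [MeasurableSpace X] (μ : Measure X)
    (T : FreeGroup (Fin r) → X → X) (φ : X → A) : ℝ :=
  ⨅ (Hs : Finset (FreeGroup (Fin r))) (ε : ℝ) (_ : 0 < ε),
    Filter.atTop.limsup fun n : ℕ => Real.log (Ecount r μ T φ (↑Hs) ε n) / n

theorem one_mem_ball (r m : ℕ) : (1 : FreeGroup (Fin r)) ∈ ball r m := by
  simp [ball, FreeGroup.toWord_one]

/-- The binary entropy function `H(x) = −x log x − (1−x) log(1−x)`. -/
def binEnt (x : ℝ) : ℝ := -x * Real.log x - (1 - x) * Real.log (1 - x)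

open scoped Classical
open Finset

theorem mem_ball {r m : ℕ} {g : FreeGroup (Fin r)} : g ∈ ball r m ↔ g.norm ≤ m := Iff.rfl

theorem ball_finite (r m : ℕ) : (ball r m).Finite :=
  ((List.finite_length_le _ m).preimage FreeGroup.toWord_injective.injOn).subset fun _ hg => hg

section Compatible

variable {G A : Type*} [Group G]

def IsCompatible (B : Set G) (s : G) (w : ({1, s} : Set G) → B → A) : Prop :=
  ∀ g (hg : g ∈ B) (hgs : g * s ∈ B),
    w ⟨1, Set.mem_insert 1 {s}⟩ ⟨g * s, hgs⟩ = w ⟨s, Set.mem_insert_of_mem 1 rfl⟩ ⟨g, hg⟩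

theorem isCompatible_obsJoin {X : Type*} {T : G → X → X}
    (hT : ∀ g h x, T (g * h) x = T g (T h x)) (φ : X → A) (B : Set G) (s : G) (x : X) :
    IsCompatible B s (obsJoin T (obsJoin T φ B) {1, s} x) := by
  intro g _ _
  simp only [obsJoin]
  rw [← hT, ← hT, mul_one]

theorem isCompatible_permJoin_iff {n : ℕ} (σ : G →* Equiv.Perm (Fin n)) {B : Set G} {s : G}
    (ψ : Fin n → B → A) (v : Fin n) :
    IsCompatible B s (permJoin σ ψ {1, s} v) ↔
      ∀ g (hg : g ∈ B) (hgs : g * s ∈ B), ψ v ⟨g * s, hgs⟩ = ψ (σ s v) ⟨g, hg⟩ := by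
  simp [IsCompatible, permJoin]

/-- Every pattern violating `P` has measure zero, so each point carrying one contributes
`1 / n` to `d^H_σ`. -/
theorem card_filter_not_le_mul_dH {X : Type*} [MeasurableSpace X] (μ : Measure X) {n : ℕ}
    (T : G → X → X) (φ : X → A) (σ : G →* Equiv.Perm (Fin n)) (ψ : Fin n → A) (H : Set G)
    [Finite (H → A)] (P : (H → A) → Prop) (hP : ∀ x, P (obsJoin T φ H x)) :
    (#{v | ¬ P (permJoin σ ψ H v)} : ℝ) ≤ n * dH μ T φ σ ψ H := by
  have : Fintype (H → A) := Fintype.ofFinite _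
  rcases Nat.eq_zero_or_pos n with rfl | hn
  · simp
  set F := permJoin σ ψ H
  have hterm : ∀ w, ¬ P w →
      (#{v | F v = w} : ℝ) ≤ n * |(μ (obsJoin T φ H ⁻¹' {w})).toReal -
        (Nat.card {j : Fin n // F j = w} : ℝ) / n| := by
    intro w hw
    have hempty : obsJoin T φ H ⁻¹' {w} = ∅ :=
      Set.eq_empty_iff_forall_notMem.2 fun x hx => hw (hx ▸ hP x)
    rw [hempty, measure_empty, ENNReal.toReal_zero, zero_sub, abs_neg,
      Nat.card_eq_fintype_card, Fintype.card_subtype, abs_of_nonneg (by positivity),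
      mul_div_cancel₀ _ (by positivity)]
  have hfiber : #{v | ¬ P (F v)} ≤ ∑ w with ¬ P w, #{v | F v = w} := by
    rw [card_eq_sum_card_fiberwise (f := F) (t := {w | ¬ P w}) fun v hv => by simpa using hv]
    exact sum_le_sum fun w _ => card_le_card (filter_subset_filter _ (subset_univ _))
  calc (#{v | ¬ P (F v)} : ℝ) ≤ ∑ w with ¬ P w, (#{v | F v = w} : ℝ) := by
        exact_mod_cast hfiber
    _ ≤ ∑ w with ¬ P w, n * |(μ (obsJoin T φ H ⁻¹' {w})).toReal -
          (Nat.card {j : Fin n // F j = w} : ℝ) / n| :=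
        sum_le_sum fun w hw => hterm w (by simpa using hw)
    _ ≤ ∑ w, n * |(μ (obsJoin T φ H ⁻¹' {w})).toReal -
          (Nat.card {j : Fin n // F j = w} : ℝ) / n| :=
        sum_le_sum_of_subset_of_nonneg (filter_subset _ _) fun _ _ _ => by positivity
    _ = n * dH μ T φ σ ψ H := by rw [dH, tsum_fintype, mul_sum]

end Compatible

section GoodVertex

variable {G A ι : Type*} [Group G] {n : ℕ}

def IsGoodVertex (σ : G →* Equiv.Perm (Fin n)) (B : Set G) (s : ι → G) (ψ : Fin n → B → A)
    (j : Fin n) : Prop :=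
  ∀ g ∈ B, ∀ i, IsCompatible B (s i) (permJoin σ ψ {1, s i} (σ g j))

theorem card_filter_not_isGoodVertex_le [Fintype ι] (σ : G →* Equiv.Perm (Fin n)) {B : Set G}
    (hB : B.Finite) (s : ι → G) (ψ : Fin n → B → A) :
    #{j | ¬ IsGoodVertex σ B s ψ j} ≤
      B.ncard * ∑ i, #{v | ¬ IsCompatible B (s i) (permJoin σ ψ {1, s i} v)} := by
  set bad : ι → Fin n → Prop := fun i v => ¬ IsCompatible B (s i) (permJoin σ ψ {1, s i} v)
  have hsub : ({j | ¬ IsGoodVertex σ B s ψ j} : Finset (Fin n)) ⊆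
      hB.toFinset.biUnion fun g => univ.biUnion fun i => {j | bad i (σ g j)} := by
    intro j hj
    simpa [IsGoodVertex, bad] using hj
  have hperm : ∀ g i, #{j | bad i (σ g j)} = #{v | bad i v} := fun g i =>
    card_equiv (σ g) (by simp)
  calc #{j | ¬ IsGoodVertex σ B s ψ j}
      ≤ ∑ g ∈ hB.toFinset, ∑ i, #{j | bad i (σ g j)} :=
        (card_le_card hsub).trans (card_biUnion_le.trans (sum_le_sum fun _ _ => card_biUnion_le))
    _ = B.ncard * ∑ i, #{v | bad i v} := by
        simp only [hperm, sum_const, smul_eq_mul, Set.ncard_eq_toFinset_card B hB]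

theorem IsGoodVertex.apply_mul_eq {σ : G →* Equiv.Perm (Fin n)} {B : Set G} {s : ι → G}
    {ψ : Fin n → B → A} {j : Fin n} (hj : IsGoodVertex σ B s ψ j) {i : ι} {x : G}
    (hx : x = s i ∨ x⁻¹ = s i) {c g : G} (hc : c ∈ B) (hxc : x * c ∈ B) (hg : g ∈ B)
    (hgx : g * x ∈ B) :
    ψ (σ c j) ⟨g * x, hgx⟩ = ψ (σ (x * c) j) ⟨g, hg⟩ := by
  rcases hx with rfl | hx
  · rw [(isCompatible_permJoin_iff σ ψ _).1 (hj c hc i) g hg hgx, map_mul, Equiv.Perm.mul_apply]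
  · obtain rfl : x = (s i)⁻¹ := by rw [← hx, inv_inv]
    have h := (isCompatible_permJoin_iff σ ψ _).1 (hj _ hxc i) (g * (s i)⁻¹) hgx
      (by rwa [inv_mul_cancel_right])
    simp only [inv_mul_cancel_right, ← Equiv.Perm.mul_apply, ← map_mul, mul_inv_cancel_left] at h
    exact h.symm

end GoodVertex

section FreeGroup

variable {r m n : ℕ} {A : Type*}

theorem IsGoodVertex.apply_eq {σ : FreeGroup (Fin r) →* Equiv.Perm (Fin n)}
    {ψ : Fin n → ball r m → A} {ω : Fin n → A} (hω : ∀ v, ψ v ⟨1, one_mem_ball r m⟩ = ω v)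
    {j : Fin n} (hj : IsGoodVertex σ (ball r m) FreeGroup.of ψ j) (g : ball r m) :
    ψ j g = ω (σ g j) := by
  suffices key : ∀ (L : List (Fin r × Bool)) (c : FreeGroup (Fin r)), L.length + c.norm ≤ m →
      ∀ hL : FreeGroup.mk L ∈ ball r m,
        ψ (σ c j) ⟨FreeGroup.mk L, hL⟩ = ω (σ (FreeGroup.mk L * c) j) by
    obtain ⟨g, hg⟩ := g
    convert key g.toWord 1 (by rw [FreeGroup.norm_one, add_zero]; exact hg)
      (by rwa [FreeGroup.mk_toWord]) using 3
      <;> simp only [FreeGroup.mk_toWord, mul_one, map_one, Equiv.Perm.one_apply]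
  intro L
  induction L using List.reverseRecOn with
  | nil =>
    intro c _ _
    change ψ (σ c j) ⟨1, _⟩ = ω (σ (1 * c) j)
    rw [one_mul]
    exact hω _
  | append_singleton L a ih =>
    intro c hlen hLa
    set x := FreeGroup.mk [a]
    have hx : x = FreeGroup.of a.1 ∨ x⁻¹ = FreeGroup.of a.1 := by
      rcases a with ⟨i, _ | _⟩
      · exact .inr rfl
      · exact .inl rfl
    have hmk : FreeGroup.mk (L ++ [a]) = FreeGroup.mk L * x := FreeGroup.mul_mk.symm
    have hlen' : L.length + 1 + c.norm ≤ m := by simpa using hlen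
    have hxc : L.length + (x * c).norm ≤ m :=
      calc L.length + (x * c).norm ≤ L.length + (x.norm + c.norm) :=
            Nat.add_le_add_left (FreeGroup.norm_mul_le x c) _
        _ ≤ m := by have : x.norm ≤ 1 := FreeGroup.norm_mk_le; omega
    have hL : FreeGroup.mk L ∈ ball r m := FreeGroup.norm_mk_le.trans (by omega)
    calc ψ (σ c j) ⟨FreeGroup.mk (L ++ [a]), hLa⟩ = ψ (σ c j) ⟨FreeGroup.mk L * x, hmk ▸ hLa⟩ := by
          congr 2
      _ = ψ (σ (x * c) j) ⟨FreeGroup.mk L, hL⟩ :=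
          hj.apply_mul_eq hx (mem_ball.2 (by omega)) (mem_ball.2 (by omega)) hL _
      _ = ω (σ (FreeGroup.mk (L ++ [a]) * c) j) := by rw [ih _ hxc hL, hmk, mul_assoc]

end FreeGroup

section Counting

variable {α β : Type*} [Fintype α]

theorem card_filter_hammingDist_le_le [DecidableEq α] [Fintype β] [DecidableEq β] (f : α → β)
    (t : ℕ) :
    #{ψ : α → β | hammingDist ψ f ≤ t} ≤
      (Fintype.card β + 1) ^ t * #{D : Finset α | #D ≤ t} := by
  refine card_le_mul_card_image_of_maps_to (f := fun (ψ : α → β) => ({i | ψ i ≠ f i} : Finset α))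
    (fun ψ hψ => by simpa [hammingDist] using hψ) _ fun D hD => ?_
  have hfiber : ∀ ψ ∈ ({ψ : α → β | hammingDist ψ f ≤ t} : Finset _).filter
      (fun ψ => ({i | ψ i ≠ f i} : Finset α) = D), ∀ i ∉ D, ψ i = f i := by
    intro ψ hψ i hi
    rw [(mem_filter.1 hψ).2.symm] at hi
    simpa using hi
  calc _ ≤ #(univ : Finset (D → β)) :=
        card_le_card_of_injOn (fun (ψ : α → β) (i : D) => ψ i) (fun _ _ => mem_coe.2 (mem_univ _))
          fun ψ₁ h₁ ψ₂ h₂ hres => funext fun i => by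
            by_cases hi : i ∈ D
            · exact congrFun hres ⟨i, hi⟩
            · rw [hfiber ψ₁ h₁ i hi, hfiber ψ₂ h₂ i hi]
    _ = Fintype.card β ^ #D := by simp
    _ ≤ (Fintype.card β + 1) ^ #D := Nat.pow_le_pow_left (Nat.le_succ _) _
    _ ≤ (Fintype.card β + 1) ^ t := Nat.pow_le_pow_right (Nat.succ_pos _) (by simpa using hD)

theorem card_finsets_card_le_mul_pow_le_one_add_pow (t : ℕ) {x : ℝ} (hx₀ : 0 ≤ x) (hx₁ : x ≤ 1) :
    #{D : Finset α | #D ≤ t} * x ^ t ≤ (1 + x) ^ Fintype.card α := by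
  calc #{D : Finset α | #D ≤ t} * x ^ t = ∑ D : Finset α with #D ≤ t, x ^ t := by
        rw [sum_const, nsmul_eq_mul]
    _ ≤ ∑ D : Finset α with #D ≤ t, x ^ #D * 1 ^ (Fintype.card α - #D) :=
        sum_le_sum fun D hD => by
          rw [one_pow, mul_one]
          exact pow_le_pow_of_le_one hx₀ hx₁ (by simpa using hD)
    _ ≤ ∑ D : Finset α, x ^ #D * 1 ^ (Fintype.card α - #D) :=
        sum_le_sum_of_subset_of_nonneg (filter_subset _ _) fun _ _ _ => by positivity
    _ = (1 + x) ^ Fintype.card α := by rw [Fintype.sum_pow_mul_eq_add_pow, add_comm]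

/-- Take `x = δ / (1 - δ)` in `card_finsets_card_finsets_card_le_mul_pow_le_one_add_pow`. -/
theorem card_finsets_card_le_le_exp_binEnt {t : ℕ} {δ : ℝ} (hδ₀ : 0 < δ) (hδ : δ ≤ 1 / 2)
    (ht : t ≤ δ * Fintype.card α) :
    (#{D : Finset α | #D ≤ t} : ℝ) ≤ exp (Fintype.card α * binEnt δ) := by
  set N : ℝ := ((Fintype.card α : ℕ) : ℝ)
  have h1δ : 0 < 1 - δ := by linarith
  set x := δ / (1 - δ)
  have hx₀ : 0 < x := div_pos hδ₀ h1δ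
  have hx₁ : x ≤ 1 := by rw [div_le_one h1δ]; linarith
  have hlog_x : log x = log δ - log (1 - δ) := log_div hδ₀.ne' h1δ.ne'
  have hlog_one_add : log (1 + x) = -log (1 - δ) := by
    rw [show 1 + x = (1 - δ)⁻¹ by simp only [x]; field_simp; ring, log_inv]
  have hlog_x_nonpos : log x ≤ 0 := log_nonpos hx₀.le hx₁
  calc (#{D : Finset α | #D ≤ t} : ℝ) ≤ (1 + x) ^ Fintype.card α / x ^ t :=
        (le_div_iff₀ (pow_pos hx₀ t)).2 (card_finsets_card_le_mul_pow_le_one_add_pow t hx₀.le hx₁)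
    _ = exp (N * log (1 + x) - t * log x) := by
        rw [exp_sub, ← log_pow, ← log_pow, exp_log (by positivity), exp_log (by positivity)]
    _ ≤ exp (N * log (1 + x) - δ * N * log x) := exp_le_exp.2 (by nlinarith)
    _ = exp (N * binEnt δ) := by rw [hlog_one_add, hlog_x, binEnt]; ring_nf

theorem card_filter_hammingDist_le_floor_le_exp [DecidableEq α] [Fintype β] [DecidableEq β]
    (f : α → β) {δ : ℝ} (hδ₀ : 0 < δ) (hδ : δ ≤ 1 / 2) :
    (#{ψ : α → β | hammingDist ψ f ≤ ⌊δ * Fintype.card α⌋₊} : ℝ) ≤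
      exp (δ * Fintype.card α * log (Fintype.card β + 1) + Fintype.card α * binEnt δ) := by
  set t := ⌊δ * Fintype.card α⌋₊
  have ht : (t : ℝ) ≤ δ * Fintype.card α := Nat.floor_le (by positivity)
  have hpow : ((Fintype.card β : ℝ) + 1) ^ t ≤
      exp (δ * Fintype.card α * log (Fintype.card β + 1)) := by
    rw [← exp_log (by positivity : (0 : ℝ) < (Fintype.card β + 1) ^ t), log_pow]
    exact exp_le_exp.2 (mul_le_mul_of_nonneg_right ht
      (log_nonneg (le_add_of_nonneg_left (Nat.cast_nonneg _))))
  calc _ ≤ (((Fintype.card β + 1) ^ t * #{D : Finset α | #D ≤ t} : ℕ) : ℝ) :=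
        Nat.cast_le.2 (card_filter_hammingDist_le_le f t)
    _ ≤ _ := by
        rw [exp_add]
        push_cast
        gcongr
        exact card_finsets_card_le_le_exp_binEnt hδ₀ hδ ht

end Counting

section Fiber

variable {r m n : ℕ} {A X : Type*} [MeasurableSpace X]

theorem card_not_isGoodVertex_le_dStar [Finite A] (μ : Measure X) {T : FreeGroup (Fin r) → X → X}
    (hT : ∀ g h x, T (g * h) x = T g (T h x)) (φ : X → A)
    (σ : FreeGroup (Fin r) →* Equiv.Perm (Fin n)) (ψ : Fin n → ball r m → A) :
    (#{j | ¬ IsGoodVertex σ (ball r m) FreeGroup.of ψ j} : ℝ) ≤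
      (ball r m).ncard * (n * dStar r μ T (obsJoin T φ (ball r m)) σ ψ) := by
  have : Finite (ball r m) := (ball_finite r m).to_subtype
  calc (#{j | ¬ IsGoodVertex σ (ball r m) FreeGroup.of ψ j} : ℝ)
      ≤ (ball r m).ncard * ∑ i, (#{v | ¬ IsCompatible (ball r m) (FreeGroup.of i)
          (permJoin σ ψ {1, FreeGroup.of i} v)} : ℝ) := by
        exact_mod_cast card_filter_not_isGoodVertex_le σ (ball_finite r m) FreeGroup.of ψ
    _ ≤ (ball r m).ncard * (n * dStar r μ T (obsJoin T φ (ball r m)) σ ψ) := by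
        gcongr
        rw [dStar, mul_sum]
        gcongr with i
        exact card_filter_not_le_mul_dH μ T _ σ ψ _ _ (isCompatible_obsJoin hT φ _ _)

theorem hammingDist_le_card_not_isGoodVertex [DecidableEq (ball r m → A)]
    {σ : FreeGroup (Fin r) →* Equiv.Perm (Fin n)}
    {ψ : Fin n → ball r m → A} {ω : Fin n → A} (hω : (fun j => ψ j ⟨1, one_mem_ball r m⟩) = ω) :
    hammingDist ψ (fun j g => ω (σ g j)) ≤ #{j | ¬ IsGoodVertex σ (ball r m) FreeGroup.of ψ j} :=
  card_le_card fun j hj => by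
    simp only [mem_filter, mem_univ, true_and] at hj ⊢
    contrapose! hj
    funext g
    exact hj.apply_eq (congrFun hω) g

theorem natCard_le_card_hammingDist_le [Fintype A] [Fintype (ball r m)]
    [DecidableEq (ball r m → A)] (μ : Measure X) {T : FreeGroup (Fin r) → X → X}
    (hT : ∀ g h x, T (g * h) x = T g (T h x)) (φ : X → A)
    (σ : FreeGroup (Fin r) →* Equiv.Perm (Fin n)) (ω : Fin n → A) {ε s : ℝ}
    (hs : (ball r m).ncard * (n * ε) ≤ s) :
    Nat.card {ψ : Fin n → (ball r m → A) //
        dStar r μ T (obsJoin T φ (ball r m)) σ ψ ≤ ε ∧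
        (fun j => ψ j ⟨1, one_mem_ball r m⟩) = ω} ≤
      #{ψ | hammingDist ψ (fun j (g : ball r m) => ω (σ g j)) ≤ ⌊s⌋₊} := by
  rw [Nat.card_eq_fintype_card, Fintype.card_subtype]
  refine card_le_card fun ψ hψ => ?_
  simp only [mem_filter, mem_univ, true_and] at hψ ⊢
  refine Nat.le_floor ((Nat.cast_le.2 (hammingDist_le_card_not_isGoodVertex hψ.2)).trans
    ((card_not_isGoodVertex_le_dStar μ hT φ σ ψ).trans (le_trans ?_ hs)))
  gcongr
  exact hψ.1

end Fiber

theorem card_fiber_le_general {r : ℕ}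
    {A : Type*} [Fintype A] [MeasurableSpace A] (m : ℕ) :
    ∃ C k : ℝ, 0 < C ∧ 0 < k ∧
      ∀ (X : Type) [MeasurableSpace X] (μ : Measure X) [IsProbabilityMeasure μ]
        (T : FreeGroup (Fin r) → X → X),
        (∀ g, MeasurePreserving (T g) μ μ) →
        (∀ g h x, T (g * h) x = T g (T h x)) →
        ∀ (φ : X → A), Measurable φ →
        ∀ (ε : ℝ), 0 < ε → ε < 1 / (4 * ((ball r m).ncard : ℝ)) →
        ∀ (n : ℕ) (σ : FreeGroup (Fin r) →* Equiv.Perm (Fin n)) (ω : Fin n → A),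
          (Nat.card {ψ : Fin n → (ball r m → A) //
              dStar r μ T (obsJoin T φ (ball r m)) σ ψ ≤ ε ∧
              (fun j => ψ j ⟨1, one_mem_ball r m⟩) = ω} : ℝ) ≤
            C * Real.exp (n * k * ε + n * binEnt (2 * ((ball r m).ncard : ℝ) * ε)) := by
  have : Fintype (ball r m) := (ball_finite r m).fintype
  set b : ℝ := ((ball r m).ncard : ℝ)
  set M := Fintype.card (ball r m → A)
  have hb : 0 < b := Nat.cast_pos.2 ((Set.ncard_pos (ball_finite r m)).2 ⟨1, one_mem_ball r m⟩)
  have hlogM : 0 ≤ log (M + 1) := log_nonneg (le_add_of_nonneg_left (Nat.cast_nonneg _))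
  refine ⟨1, 2 * b * log (M + 1) + 1, one_pos, by positivity, ?_⟩
  intro X _ μ _ T _ hT φ _ ε hε hεb n σ ω
  set δ := 2 * b * ε
  have hδ_half : δ ≤ 1 / 2 := by
    rw [lt_div_iff₀ (by positivity)] at hεb
    linarith
  have hεn : 0 ≤ (n : ℝ) * ε := by positivity
  have hbad : b * (n * ε) ≤ δ * Fintype.card (Fin n) := by
    rw [Fintype.card_fin]
    linear_combination b * hεn
  calc _ ≤ (#{ψ | hammingDist ψ (fun j (g : ball r m) => ω (σ g j)) ≤
          ⌊δ * Fintype.card (Fin n)⌋₊} : ℝ) :=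
        Nat.cast_le.2 (natCard_le_card_hammingDist_le μ hT φ σ ω hbad)
    _ ≤ exp (δ * n * log (M + 1) + n * binEnt δ) := by
        simpa only [Fintype.card_fin] using card_filter_hammingDist_le_floor_le_exp
          (fun j (g : ball r m) => ω (σ g j)) (by positivity) hδ_half
    _ ≤ 1 * exp (n * (2 * b * log (M + 1) + 1) * ε + n * binEnt δ) := by
        rw [one_mul]
        exact exp_le_exp.2 (by linear_combination hεn)

/-- Let `B = B(e,m)`. There are constants `C, k > 0` depending only on `|A|` and `|B|` such
that for every `ε` with `0 < ε < 1/(4|B|)`, every probability space `(X,μ)`, every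
measure-preserving action `T`, every finite observable `φ : X → A`, every `n`, every
homomorphism `σ : G →* Sym(n)` and every `ω : {1,…,n} → A`, the number of maps
`ψ : {1,…,n} → A^B` with `d^*_σ(φ^B,ψ) ≤ ε` and `π_e ∘ ψ = ω` is at most
`C exp(nkε + nH(2|B|ε))`. -/
theorem card_fiber_le {r : ℕ} (hr : 1 ≤ r)
    {A : Type*} [Fintype A] [MeasurableSpace A] [MeasurableSingletonClass A] (m : ℕ) :
    ∃ C k : ℝ, 0 < C ∧ 0 < k ∧
      ∀ (X : Type) [MeasurableSpace X] (μ : Measure X) [IsProbabilityMeasure μ]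
        (T : FreeGroup (Fin r) → X → X),
        (∀ g, MeasurePreserving (T g) μ μ) →
        (∀ g h x, T (g * h) x = T g (T h x)) →
        ∀ (φ : X → A), Measurable φ →
        ∀ (ε : ℝ), 0 < ε → ε < 1 / (4 * ((ball r m).ncard : ℝ)) →
        ∀ (n : ℕ) (σ : FreeGroup (Fin r) →* Equiv.Perm (Fin n)) (ω : Fin n → A),
          (Nat.card {ψ : Fin n → (ball r m → A) //
              dStar r μ T (obsJoin T φ (ball r m)) σ ψ ≤ ε ∧
              (fun j => ψ j ⟨1, one_mem_ball r m⟩) = ω} : ℝ) ≤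
            C * Real.exp (n * k * ε + n * binEnt (2 * ((ball r m).ncard : ℝ) * ε)) :=
  card_fiber_le_general m
end
end
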